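/- arXiv:1007.2932 — 3 statements merged into one kernel-verified Lean document; each statement's English description precedes it below -/
import Mathlib

section
/- For every integer n ≥ 2 and every sequence (i_1, …, i_{n−1}) that is a permutation of (1, …, n−1), the braid β = σ_{i_1} σ_{i_2} ⋯ σ_{i_{n−1}} ∈ B_n satisfies β^n = Δ_n², i.e., β is an n-th root of the full twist. -/
/-!
A product of all the generators in any order is conjugate to `δ = σ_1 ⋯ σ_{n-1}`: the top
generator `σ_m` commutes with every letter on one side of it, so the word is either
`w σ_m` or `σ_m w`, and the second is conjugate to the first; induct on `m`.
Since `δ σ_i δ⁻¹ = σ_{i+1}` and `δ² σ_{n-1} = σ_1 δ²`, the power `δⁿ` commutes with `σ_1` and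
hence with every `σ_i = δ^{i-1} σ_1 δ^{1-i}`, so `δⁿ` is central and all these words have the
same `n`-th power. Finally `Δ_{m+1} = δ_{m+1} Δ_m = Δ_m (σ_m ⋯ σ_1)` and
`δ_{m+1}^{m+1} = δ_m^{m+1} (σ_m ⋯ σ_1)` give `δ_{m+1}^{m+1} = Δ_{m+1}²` by induction on `m`.
-/

/-- The braid relations on `m` generators (for the braid group `B_{m+1}`). -/
def braidRels (m : ℕ) : Set (FreeGroup (Fin m)) :=
  { r | (∃ i j : Fin m, (i : ℕ) + 2 ≤ (j : ℕ) ∧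
      r = FreeGroup.of i * FreeGroup.of j * (FreeGroup.of i)⁻¹ * (FreeGroup.of j)⁻¹) ∨
    (∃ i j : Fin m, (j : ℕ) = (i : ℕ) + 1 ∧
      r = FreeGroup.of i * FreeGroup.of j * FreeGroup.of i *
          (FreeGroup.of j * FreeGroup.of i * FreeGroup.of j)⁻¹) }

/-- The braid group `B_n`, presented on `n - 1` generators. -/
abbrev BraidGroup (n : ℕ) := PresentedGroup (braidRels (n - 1))

/-- The generator `σ_i` of `B_n`, for `1 ≤ i ≤ n - 1` (and the identity otherwise). -/
def braidGen (n i : ℕ) : BraidGroup n :=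
  if h : 1 ≤ i ∧ i ≤ n - 1 then PresentedGroup.of (⟨i - 1, by omega⟩ : Fin (n - 1)) else 1

/-- The product `σ_{i_1} σ_{i_2} ⋯ σ_{i_ℓ}` associated to a list of indices. -/
def wordProd (n : ℕ) (l : List ℕ) : BraidGroup n := (l.map (braidGen n)).prod

/-- A positive braid: a product of generators `σ_i`, `1 ≤ i ≤ n-1` (no inverses). -/
def IsPositiveBraid (n : ℕ) (β : BraidGroup n) : Prop :=
  ∃ l : List ℕ, (∀ i ∈ l, 1 ≤ i ∧ i ≤ n - 1) ∧ β = wordProd n l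

/-- The half twist `Δ_n = (σ_1)(σ_2 σ_1)(σ_3 σ_2 σ_1) ⋯ (σ_{n-1} ⋯ σ_1)`. -/
def halfTwist (n : ℕ) : BraidGroup n :=
  wordProd n (((List.range (n - 1)).map (fun k => (List.range (k + 1)).reverse.map (· + 1))).flatten)

/-- The standard root `δ_n = σ_1 σ_2 ⋯ σ_{n-1}`. -/
def stdRoot (n : ℕ) : BraidGroup n := wordProd n ((List.range (n - 1)).map (· + 1))

/-- The reversed root `δ̄_n = σ_{n-1} σ_{n-2} ⋯ σ_1`. -/
def stdRootBar (n : ℕ) : BraidGroup n := wordProd n (((List.range (n - 1)).map (· + 1)).reverse)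

/-- The descending chain `b, b-1, …, a+1` (of length `b - a`). -/
def chainDesc (a b : ℕ) : List ℕ := (List.range (b - a)).map (fun t => b - t)

/-- The normal-form index sequence of a subset `S = {j_1 < ⋯ < j_r} ⊆ {1, …, n-2}`:
the concatenation of the decreasing chains
`j_1, …, 1; j_2, …, j_1 + 1; …; n-1, …, j_r + 1`. -/
def normalWord (n : ℕ) (S : Finset ℕ) : List ℕ :=
  let bs : List ℕ := (0 :: S.sort (· ≤ ·)) ++ [n - 1]
  ((bs.zip bs.tail).map (fun p => chainDesc p.1 p.2)).flatten

/-- The normal-form braid of a subset `S ⊆ {1, …, n-2}`. -/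
def normalBraid (n : ℕ) (S : Finset ℕ) : BraidGroup n := wordProd n (normalWord n S)

lemma List.map_succ_reverse_range (m : ℕ) :
    (List.range m).reverse.map (· + 1) = (List.range m).map (m - ·) := by
  induction m with
  | zero => rfl
  | succ m ih =>
    conv_lhs => rw [List.range_succ, List.reverse_append, List.map_append, ih]
    conv_rhs => rw [List.range_succ_eq_map]
    simp [Function.comp_def]

section

variable {n : ℕ}

lemma braidGen_of_not_mem {i : ℕ} (h : ¬ (1 ≤ i ∧ i ≤ n - 1)) : braidGen n i = 1 := dif_neg h

lemma braidGen_eq_mk {i : ℕ} (h : 1 ≤ i ∧ i ≤ n - 1) :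
    braidGen n i = PresentedGroup.mk _ (FreeGroup.of ⟨i - 1, by omega⟩) := dif_pos h

lemma braidGen_commute {i j : ℕ} (h : i + 2 ≤ j ∨ j + 2 ≤ i) :
    Commute (braidGen n i) (braidGen n j) := by
  wlog hij : i + 2 ≤ j generalizing i j
  · exact (this h.symm (h.resolve_left hij)).symm
  by_cases hi : 1 ≤ i ∧ i ≤ n - 1
  · by_cases hj : 1 ≤ j ∧ j ≤ n - 1
    · rw [braidGen_eq_mk hi, braidGen_eq_mk hj, ← commutatorElement_eq_one_iff_commute,
        commutatorElement_def]
      simpa using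
        PresentedGroup.one_of_mem (rels := braidRels (n - 1)) (Or.inl ⟨_, _, by simp; omega, rfl⟩)
    · rw [braidGen_of_not_mem hj]; exact Commute.one_right _
  · rw [braidGen_of_not_mem hi]; exact Commute.one_left _

lemma braidGen_braid {i : ℕ} (hi : 1 ≤ i) (hin : i + 1 ≤ n - 1) :
    braidGen n i * braidGen n (i + 1) * braidGen n i
      = braidGen n (i + 1) * braidGen n i * braidGen n (i + 1) := by
  rw [braidGen_eq_mk ⟨hi, by omega⟩, braidGen_eq_mk ⟨by omega, hin⟩, ← mul_inv_eq_one]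
  simpa using
    PresentedGroup.one_of_mem (rels := braidRels (n - 1)) (Or.inr ⟨_, _, by simp; omega, rfl⟩)

@[simp] lemma wordProd_nil : wordProd n [] = 1 := rfl

@[simp] lemma wordProd_cons (a : ℕ) (l : List ℕ) :
    wordProd n (a :: l) = braidGen n a * wordProd n l := by
  simp [wordProd]

@[simp] lemma wordProd_append (l₁ l₂ : List ℕ) :
    wordProd n (l₁ ++ l₂) = wordProd n l₁ * wordProd n l₂ := by
  simp [wordProd]

lemma braidGen_commute_wordProd {i : ℕ} {l : List ℕ} (h : ∀ x ∈ l, i + 2 ≤ x ∨ x + 2 ≤ i) :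
    Commute (braidGen n i) (wordProd n l) :=
  Commute.list_prod_right _ _ <| by simpa using fun x hx => braidGen_commute (h x hx)

-- `δ_{m+1} = σ_1 ⋯ σ_m`
def ascProd (n m : ℕ) : BraidGroup n := wordProd n ((List.range m).map (· + 1))

-- `σ_b σ_{b-1} ⋯ σ_{b-k+1}`
def descProd (n b k : ℕ) : BraidGroup n := wordProd n ((List.range k).map (b - ·))

-- `Δ_{m+1}`, the half twist of the first `m + 1` strands
def halfTwistUpTo (n m : ℕ) : BraidGroup n :=
  wordProd n (((List.range m).map fun k => (List.range (k + 1)).reverse.map (· + 1)).flatten)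

@[simp] lemma ascProd_zero : ascProd n 0 = 1 := rfl

lemma ascProd_succ (m : ℕ) : ascProd n (m + 1) = ascProd n m * braidGen n (m + 1) := by
  simp [ascProd, List.range_succ]

lemma braidGen_commute_ascProd {i m : ℕ} (h : m + 2 ≤ i) : Commute (braidGen n i) (ascProd n m) :=
  braidGen_commute_wordProd <| by simp; omega

lemma ascProd_mul_braidGen {m i : ℕ} (hm : m ≤ n - 1) (hi : 1 ≤ i) (him : i < m) :
    ascProd n m * braidGen n i = braidGen n (i + 1) * ascProd n m := by
  induction m with
  | zero => omega
  | succ m ih =>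
    rw [ascProd_succ]
    rcases Nat.lt_or_eq_of_le (Nat.le_of_lt_succ him) with him' | rfl
    · rw [mul_assoc, ← (braidGen_commute (by omega)).eq, ← mul_assoc,
        ih (by omega) him', mul_assoc]
    · obtain ⟨p, rfl⟩ : ∃ p, i = p + 1 := ⟨i - 1, by omega⟩
      rw [ascProd_succ, mul_assoc, mul_assoc, ← mul_assoc (braidGen n _),
        braidGen_braid (by omega) hm, ← mul_assoc, ← mul_assoc,
        ← (braidGen_commute_ascProd le_rfl).eq]
      simp only [mul_assoc]

lemma ascProd_mul_wordProd {m : ℕ} (hm : m ≤ n - 1) {l : List ℕ} (hl : ∀ i ∈ l, 1 ≤ i ∧ i < m) :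
    ascProd n m * wordProd n l = wordProd n (l.map (· + 1)) * ascProd n m := by
  induction l with
  | nil => simp
  | cons i l ih =>
    simp only [List.forall_mem_cons] at hl
    rw [wordProd_cons, ← mul_assoc, ascProd_mul_braidGen hm hl.1.1 hl.1.2, mul_assoc, ih hl.2,
      List.map_cons, wordProd_cons, mul_assoc]

lemma ascProd_pow_mul_braidGen {m i j : ℕ} (hm : m ≤ n - 1) (hi : 1 ≤ i) (hij : i + j ≤ m) :
    ascProd n m ^ j * braidGen n i = braidGen n (i + j) * ascProd n m ^ j := by
  induction j generalizing i with
  | zero => simp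
  | succ j ih =>
    rw [pow_succ, mul_assoc, ascProd_mul_braidGen hm hi (by omega), ← mul_assoc,
      ih (by omega) (by omega), mul_assoc, add_assoc, add_comm 1]

lemma ascProd_succ_sq {p : ℕ} (hp : p + 2 ≤ n - 1) :
    ascProd n (p + 2) ^ 2 = ascProd n (p + 1) ^ 2 * braidGen n (p + 2) * braidGen n (p + 1) := by
  have hX : braidGen n (p + 2) * ascProd n (p + 1) * braidGen n (p + 2)
      = ascProd n (p + 1) * braidGen n (p + 2) * braidGen n (p + 1) := by
    rw [ascProd_succ, ← mul_assoc, (braidGen_commute_ascProd le_rfl).eq, mul_assoc, mul_assoc,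
      ← mul_assoc (braidGen n _), ← braidGen_braid (by omega) hp]
    simp only [mul_assoc]
  rw [sq, sq, ascProd_succ (p + 1), mul_assoc, ← mul_assoc (braidGen n _), hX]
  simp only [mul_assoc]

lemma ascProd_sq_mul_braidGen {m : ℕ} (hm1 : 1 ≤ m) (hm : m ≤ n - 1) :
    ascProd n m ^ 2 * braidGen n m = braidGen n 1 * ascProd n m ^ 2 := by
  induction m, hm1 using Nat.le_induction with
  | base => simp [ascProd_succ, sq, mul_assoc]
  | succ m hm1 ih =>
    obtain ⟨p, rfl⟩ : ∃ p, m = p + 1 := ⟨m - 1, by omega⟩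
    rw [ascProd_succ_sq hm, ← mul_assoc, ← mul_assoc, ← ih (by omega)]
    simp only [mul_assoc]
    rw [← mul_assoc (braidGen n (p + 1)), braidGen_braid (by omega) hm]
    simp only [mul_assoc]

lemma commute_ascProd_pow_braidGen {m i : ℕ} (hm : m ≤ n - 1) (hi : 1 ≤ i) (him : i ≤ m) :
    Commute (ascProd n m ^ (m + 1)) (braidGen n i) := by
  set δ := ascProd n m
  have h1 : Commute (δ ^ (m + 1)) (braidGen n 1) := by
    have hshift : δ ^ (m - 1) * braidGen n 1 = braidGen n m * δ ^ (m - 1) := by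
      rw [ascProd_pow_mul_braidGen hm le_rfl (by omega), Nat.add_sub_cancel' (by omega)]
    calc δ ^ (m + 1) * braidGen n 1 = δ ^ 2 * (δ ^ (m - 1) * braidGen n 1) := by
          rw [← mul_assoc, ← pow_add, show 2 + (m - 1) = m + 1 by omega]
      _ = braidGen n 1 * δ ^ (m + 1) := by
          rw [hshift, ← mul_assoc, ascProd_sq_mul_braidGen (by omega) hm, mul_assoc, ← pow_add,
            show 2 + (m - 1) = m + 1 by omega]
  have hconj : braidGen n i = δ ^ (i - 1) * braidGen n 1 * (δ ^ (i - 1))⁻¹ := by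
    rw [ascProd_pow_mul_braidGen hm le_rfl (by omega), Nat.add_sub_cancel' hi,
      mul_inv_cancel_right]
  rw [hconj]
  exact ((Commute.pow_pow_self δ _ _).mul_right h1).mul_right (Commute.pow_pow_self δ _ _).inv_right

lemma mem_center_of_commute_braidGen {z : BraidGroup n} (h : ∀ i, Commute z (braidGen n i)) :
    z ∈ Subgroup.center (BraidGroup n) := by
  rw [Subgroup.center_eq_iInf (PresentedGroup.closure_range_of _)]
  simp only [Subgroup.mem_iInf, Set.mem_range, Subgroup.mem_centralizer_singleton_iff,
    forall_exists_index, forall_apply_eq_imp_iff]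
  intro j
  have := h (j + 1)
  rw [braidGen_eq_mk ⟨by omega, by omega⟩] at this
  simpa [PresentedGroup.of] using this.eq

lemma descProd_succ_succ (b k : ℕ) :
    descProd n (b + 1) (k + 1) = braidGen n (b + 1) * descProd n b k := by
  simp [descProd, List.range_succ_eq_map, Function.comp_def]

lemma ascProd_mul_descProd {m k : ℕ} (hm : m + 1 ≤ n - 1) (hk : k ≤ m) :
    ascProd n (m + 1) * descProd n m k = descProd n (m + 1) k * ascProd n (m + 1) := by
  rw [descProd, ascProd_mul_wordProd hm (by simp; omega), descProd, List.map_map]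
  congr 2
  exact List.map_congr_left fun t ht => by simp at ht ⊢; omega

lemma ascProd_succ_pow {m k : ℕ} (hm : m + 1 ≤ n - 1) (hk : k ≤ m + 1) :
    ascProd n (m + 1) ^ k = ascProd n m ^ k * descProd n (m + 1) k := by
  induction k with
  | zero => simp [descProd]
  | succ k ih =>
    rw [pow_succ, ih (by omega), mul_assoc, ← ascProd_mul_descProd hm (by omega), ascProd_succ,
      descProd_succ_succ, pow_succ]
    simp only [mul_assoc]

lemma halfTwistUpTo_succ (m : ℕ) :
    halfTwistUpTo n (m + 1) = halfTwistUpTo n m * descProd n (m + 1) (m + 1) := by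
  rw [descProd, ← List.map_succ_reverse_range]
  simp [halfTwistUpTo, List.range_succ]

lemma halfTwistUpTo_succ_eq_ascProd_mul (m : ℕ) :
    halfTwistUpTo n (m + 1) = ascProd n (m + 1) * halfTwistUpTo n m := by
  induction m with
  | zero => simp [halfTwistUpTo, ascProd, wordProd]
  | succ m ih =>
    have hc : Commute (braidGen n (m + 2)) (halfTwistUpTo n m) :=
      braidGen_commute_wordProd <| by simp; omega
    calc halfTwistUpTo n (m + 2)
        = ascProd n (m + 1) * (halfTwistUpTo n m * braidGen n (m + 2)) *
            descProd n (m + 1) (m + 1) := by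
          rw [halfTwistUpTo_succ, ih, descProd_succ_succ]
          simp only [mul_assoc]
      _ = ascProd n (m + 2) * halfTwistUpTo n (m + 1) := by
          rw [← hc.eq, ascProd_succ (m + 1), halfTwistUpTo_succ]
          simp only [mul_assoc]

lemma ascProd_pow_eq_halfTwistUpTo_sq {m : ℕ} (hm : m ≤ n - 1) :
    ascProd n m ^ (m + 1) = halfTwistUpTo n m ^ 2 := by
  induction m with
  | zero => simp [halfTwistUpTo]
  | succ m ih =>
    calc ascProd n (m + 1) ^ (m + 2)
        = ascProd n (m + 1) * (ascProd n m ^ (m + 1) * descProd n (m + 1) (m + 1)) := by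
          rw [pow_succ', ascProd_succ_pow hm le_rfl]
      _ = (ascProd n (m + 1) * halfTwistUpTo n m) *
            (halfTwistUpTo n m * descProd n (m + 1) (m + 1)) := by
          rw [ih (by omega), sq]
          simp only [mul_assoc]
      _ = halfTwistUpTo n (m + 1) ^ 2 := by
          rw [← halfTwistUpTo_succ_eq_ascProd_mul, ← halfTwistUpTo_succ, sq]

lemma exists_conj_ascProd_of_perm {m : ℕ} {l : List ℕ}
    (hl : l.Perm ((List.range m).map (· + 1))) :
    ∃ g : BraidGroup n, (∀ j, m + 1 ≤ j → Commute g (braidGen n j)) ∧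
      wordProd n l = g * ascProd n m * g⁻¹ := by
  induction m generalizing l with
  | zero => exact ⟨1, fun _ _ => Commute.one_left _, by simp [List.perm_nil.mp hl]⟩
  | succ m ih =>
    obtain ⟨x, y, rfl⟩ := List.append_of_mem (hl.mem_iff.mpr (by simp : m + 1 ∈ _))
    have hxy : (x ++ y).Perm ((List.range m).map (· + 1)) := by
      refine (List.perm_middle.symm.trans (hl.trans ?_)).cons_inv
      rw [List.range_succ, List.map_append]
      exact List.perm_append_singleton _ _
    have hbound : ∀ a ∈ x ++ y, 1 ≤ a ∧ a ≤ m := fun a ha => by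
      obtain ⟨b, hb, rfl⟩ := List.mem_map.mp (hxy.subset ha)
      simp at hb; omega
    obtain ⟨g, hg, hw⟩ := ih hxy
    have hroot : wordProd n (x ++ y) * braidGen n (m + 1) = g * ascProd n (m + 1) * g⁻¹ := by
      rw [hw, ascProd_succ, mul_assoc, (hg _ le_rfl).inv_left.eq]
      simp only [mul_assoc]
    by_cases hy : ∀ a ∈ y, a + 2 ≤ m + 1
    · refine ⟨g, fun j hj => hg j (by omega), ?_⟩
      rw [← hroot, wordProd_append, wordProd_cons, wordProd_append,
        (braidGen_commute_wordProd fun a ha => Or.inr (hy a ha)).eq, mul_assoc]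
    · have hx : ∀ a ∈ x, a + 2 ≤ m + 1 := by
        push Not at hy
        obtain ⟨b, hb, hbm⟩ := hy
        have hnodup : (x ++ y).Nodup :=
          hxy.nodup_iff.mpr (List.nodup_range.map (add_left_injective 1))
        intro a ha
        have hab : a ≠ b := fun h => List.disjoint_of_nodup_append hnodup ha (h ▸ hb)
        have := hbound a (by simp [ha]); have := hbound b (by simp [hb]); omega
      refine ⟨(wordProd n (x ++ y))⁻¹ * g, fun j hj => ?_, ?_⟩
      · refine Commute.mul_left (Commute.inv_left ?_) (hg j (by omega))
        exact (braidGen_commute_wordProd fun a ha => Or.inr (by have := hbound a ha; omega)).symm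
      · have hσw : wordProd n (x ++ (m + 1) :: y) = braidGen n (m + 1) * wordProd n (x ++ y) := by
          rw [wordProd_append, wordProd_cons, ← mul_assoc,
            ← (braidGen_commute_wordProd fun a ha => Or.inr (hx a ha)).eq, wordProd_append,
            mul_assoc]
        rw [hσw, mul_inv_rev, inv_inv, ← mul_assoc, mul_assoc _ g, mul_assoc _ (g * _), ← hroot]
        group

end

lemma stdRoot_pow_mem_center (n : ℕ) : stdRoot n ^ n ∈ Subgroup.center (BraidGroup n) := by
  refine mem_center_of_commute_braidGen fun i => ?_
  by_cases hi : 1 ≤ i ∧ i ≤ n - 1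
  · obtain ⟨m, rfl⟩ : ∃ m, n = m + 1 := ⟨n - 1, by omega⟩
    exact commute_ascProd_pow_braidGen le_rfl hi.1 hi.2
  · rw [braidGen_of_not_mem hi]; exact Commute.one_right _

lemma stdRoot_pow_eq_halfTwist_sq (n : ℕ) : stdRoot n ^ n = halfTwist n ^ 2 := by
  cases n with
  | zero => rfl
  | succ m => exact ascProd_pow_eq_halfTwistUpTo_sq le_rfl

theorem permutation_word_is_root_general (n : ℕ) (l : List ℕ)
    (hperm : l.Perm ((List.range (n - 1)).map (· + 1))) :
    (wordProd n l) ^ n = (halfTwist n) ^ 2 := by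
  obtain ⟨g, -, hg⟩ := exists_conj_ascProd_of_perm (n := n) hperm
  rw [hg, conj_pow, ← stdRoot_pow_eq_halfTwist_sq]
  exact mul_inv_eq_of_eq_mul (Subgroup.mem_center_iff.mp (stdRoot_pow_mem_center n) g)

/-- For every `n ≥ 2` and every sequence `(i_1, …, i_{n-1})` that is a
permutation of `(1, …, n-1)`, the braid `β = σ_{i_1} σ_{i_2} ⋯ σ_{i_{n-1}} ∈ B_n`
satisfies `β ^ n = Δ_n²`. -/
theorem permutation_word_is_root (n : ℕ) (hn : 2 ≤ n) (l : List ℕ)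
    (hperm : l.Perm ((List.range (n - 1)).map (· + 1))) :
    (wordProd n l) ^ n = (halfTwist n) ^ 2 :=
  permutation_word_is_root_general n l hperm
end

section
/- Let n ≥ 2 and let (i_1, …, i_{n−1}) be any permutation of (1, …, n−1). Then the product of adjacent transpositions (i_1, i_1+1) · (i_2, i_2+1) ⋯ (i_{n−1}, i_{n−1}+1) in the symmetric group S_n on {1, …, n} is a cycle of length n (equivalently, it is a cyclic permutation whose support is all of {1, …, n}). -/
/-!
Induct on `k`: any product of the transpositions `(i, i+1)`, `1 ≤ i ≤ k`, each taken once, is a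
cycle on `{1, …, k+1}`. Writing such a product for `k + 1` as `U (k+1, k+2) V`, it is conjugate by
`U` to `(k+1, k+2) (V U)`. By induction `V U` is a cycle on `{1, …, k+1}`, and multiplying a cycle by
a transposition joining a point of its support to a new point yields a cycle with the new point
added to the support. Conjugation by `U`, which moves nothing outside `{1, …, k+1}`, preserves
both properties.
-/

/-- The adjacent transposition `(i, i+1)` in the symmetric group on `{1, …, n}`
(0-based: swapping `i - 1` and `i` in `Fin n`), for `1 ≤ i ≤ n - 1`;
the identity otherwise. -/
def adjSwap (n i : ℕ) : Equiv.Perm (Fin n) :=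
  if h : 1 ≤ i ∧ i ≤ n - 1 then
    Equiv.swap (⟨i - 1, by omega⟩ : Fin n) (⟨i, by omega⟩ : Fin n)
  else 1

open Equiv Equiv.Perm

theorem Equiv.Perm.IsCycle.swap_mul_of_notMem_support {α : Type*} [Fintype α] [DecidableEq α]
    {τ : Perm α} (hτ : τ.IsCycle) {a b : α} (ha : a ∈ τ.support) (hb : b ∉ τ.support) :
    (swap a b * τ).IsCycle ∧ (swap a b * τ).support = insert b τ.support := by
  obtain ⟨t, ht⟩ : ∃ t, τ.toList a = a :: t := by
    cases h : τ.toList a with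
    | nil => exact absurd h (toList_eq_nil_iff.not.mpr (not_not.mpr ha))
    | cons c t => exact ⟨t, by simpa [h] using toList_getElem_zero τ a ha⟩
  have hform : (a :: t).formPerm = τ := by
    rw [← ht, formPerm_toList, hτ.cycleOf_eq (mem_support.mp ha)]
  have hsupp : τ.support = (a :: t).toFinset := by
    rw [← hform, List.support_formPerm_of_nodup _ (ht ▸ nodup_toList τ a)
      (ht ▸ toList_ne_singleton τ a)]
  have hnodup : (b :: a :: t).Nodup :=
    List.nodup_cons.mpr ⟨by simpa [hsupp] using hb, ht ▸ nodup_toList τ a⟩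
  rw [swap_comm, ← hform, ← List.formPerm_cons_cons, hform, hsupp]
  refine ⟨List.isCycle_formPerm hnodup (by simp), ?_⟩
  rw [List.support_formPerm_of_nodup _ hnodup (by simp), List.toFinset_cons]

theorem List.exists_eq_append_cons_of_perm_cons {α : Type*} {l m : List α} {a : α}
    (h : l.Perm (a :: m)) : ∃ u v, l = u ++ a :: v ∧ (v ++ u).Perm m := by
  obtain ⟨u, v, rfl⟩ := List.append_of_mem (h.mem_iff.mpr List.mem_cons_self)
  exact ⟨u, v, rfl, List.perm_append_comm.trans (List.perm_middle.symm.trans h).cons_inv⟩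

lemma perm_map_range_succ (k : ℕ) :
    ((List.range (k + 1)).map (· + 1)).Perm ((k + 1) :: (List.range k).map (· + 1)) := by
  simp [List.range_succ]

/-- `{0, …, k}` in `Fin n`, i.e. the points `1, …, k + 1` of the 1-based picture. -/
def initialSegment (n k : ℕ) : Finset (Fin n) := {x | (x : ℕ) ≤ k}

@[simp]
lemma mem_initialSegment {n k : ℕ} {x : Fin n} : x ∈ initialSegment n k ↔ (x : ℕ) ≤ k := by
  simp [initialSegment]

lemma adjSwap_succ {n k : ℕ} (hk : k + 1 < n) :
    adjSwap n (k + 1) = swap ⟨k, by omega⟩ ⟨k + 1, hk⟩ := by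
  rw [adjSwap, dif_pos ⟨by omega, by omega⟩]
  rfl

lemma support_adjSwap_subset (n i : ℕ) : (adjSwap n i).support ⊆ initialSegment n i := by
  unfold adjSwap
  split_ifs with hi
  · rw [support_swap (by simp [Fin.ext_iff]; omega)]
    simp [Finset.insert_subset_iff]
  · simp

lemma support_prod_adjSwap_subset {n k : ℕ} {l : List ℕ} (hl : ∀ i ∈ l, i ≤ k) :
    (l.map (adjSwap n)).prod.support ⊆ initialSegment n k := by
  induction l with
  | nil => simp
  | cons i l ih =>
    rw [List.map_cons, List.prod_cons]
    refine (support_mul_le _ _).trans (Finset.union_subset ?_ (ih fun j hj => hl j (.tail _ hj)))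
    refine (support_adjSwap_subset n i).trans fun x hx => ?_
    simp only [mem_initialSegment] at hx ⊢
    exact hx.trans (hl i List.mem_cons_self)

theorem isCycle_prod_adjSwap_of_perm {n k : ℕ} (hk : 1 ≤ k) (hkn : k < n) {l : List ℕ}
    (hl : l.Perm ((List.range k).map (· + 1))) :
    (l.map (adjSwap n)).prod.IsCycle ∧ (l.map (adjSwap n)).prod.support = initialSegment n k := by
  induction k, hk using Nat.le_induction generalizing l with
  | base =>
    have h01 : (⟨0, by omega⟩ : Fin n) ≠ ⟨1, hkn⟩ := by simp [Fin.ext_iff]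
    obtain rfl : l = [1] := List.perm_singleton.mp (by simpa using hl)
    simp only [List.map_cons, List.map_nil, List.prod_cons, List.prod_nil, mul_one,
      adjSwap_succ hkn, support_swap h01]
    refine ⟨isCycle_swap h01, ?_⟩
    ext x
    simp [Fin.ext_iff]
    omega
  | succ k _ ih =>
    obtain ⟨u, v, rfl, huv⟩ :=
      List.exists_eq_append_cons_of_perm_cons (hl.trans (perm_map_range_succ k))
    obtain ⟨hcyc, hsupp⟩ := ih (by omega) huv
    set U := (u.map (adjSwap n)).prod
    have hconj : ((u ++ (k + 1) :: v).map (adjSwap n)).prod =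
        U * (swap ⟨k, by omega⟩ ⟨k + 1, hkn⟩ * ((v ++ u).map (adjSwap n)).prod) * U⁻¹ := by
      simp only [List.map_append, List.map_cons, List.prod_append, List.prod_cons,
        adjSwap_succ hkn, U]
      group
    have hU : U.support ⊆ initialSegment n (k + 1) := support_prod_adjSwap_subset fun i hi => by
      have := huv.mem_iff.mp (List.mem_append_right v hi)
      simp at this
      omega
    obtain ⟨hc, hs⟩ := hcyc.swap_mul_of_notMem_support (a := ⟨k, by omega⟩) (b := ⟨k + 1, hkn⟩)
      (by rw [hsupp]; simp) (by rw [hsupp]; simp)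
    have hinsert : insert ⟨k + 1, hkn⟩ (initialSegment n k) = initialSegment n (k + 1) := by
      ext x
      simp [Fin.ext_iff]
      omega
    rw [hconj]
    refine ⟨hc.conj, ?_⟩
    rw [support_conj, hs, hsupp, hinsert, Finset.map_perm]
    rwa [← coe_support_eq_set_support, Finset.coe_subset]

/-- For `n ≥ 2` and any permutation `(i_1, …, i_{n-1})` of `(1, …, n-1)`,
the product of adjacent transpositions `(i_1, i_1+1) (i_2, i_2+1) ⋯ (i_{n-1}, i_{n-1}+1)`
in `S_n` is a cycle of length `n`: it is a cycle whose support is all of `{1, …, n}`. -/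
theorem product_of_adjacent_transpositions_is_n_cycle (n : ℕ) (hn : 2 ≤ n) (l : List ℕ)
    (hperm : l.Perm ((List.range (n - 1)).map (· + 1))) :
    ((l.map (adjSwap n)).prod).IsCycle ∧
      ((l.map (adjSwap n)).prod).support = Finset.univ := by
  obtain ⟨hcyc, hsupp⟩ :=
    isCycle_prod_adjSwap_of_perm (n := n) (k := n - 1) (by omega) (by omega) hperm
  refine ⟨hcyc, hsupp.trans (Finset.eq_univ_of_forall fun x => ?_)⟩
  simp only [mem_initialSegment]
  omega
end

section
/- Let n ≥ 2, let S be a subset of {1, …, n−2}, and let (i_1, …, i_{n−1}) be the normal-form index sequence of S. For every j with 1 < j < n−1: (a) the index j occurs in the sequence before both j−1 and j+1 if and only if j is the first entry of one of the decreasing chains and that chain has length at least two (equivalently, j ∈ S and j−1 ∉ S); and (b) the index j occurs after both j−1 and j+1 if and only if j is the last entry of a decreasing chain of length at least two (equivalently, j−1 ∈ S and j ∉ S). -/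
lemma length_chainDesc (a b : ℕ) : (chainDesc a b).length = b - a := by
  simp [chainDesc]

lemma mem_chainDesc {a b k : ℕ} : k ∈ chainDesc a b ↔ a < k ∧ k ≤ b := by
  simp only [chainDesc, List.mem_map, List.mem_range]
  constructor
  · rintro ⟨t, ht, rfl⟩
    omega
  · intro h
    exact ⟨b - k, by omega, by omega⟩

lemma chainDesc_eq_append {a b c : ℕ} (hac : a ≤ c) (hcb : c ≤ b) :
    chainDesc a b = chainDesc c b ++ chainDesc a c := by
  rw [chainDesc, show b - a = (b - c) + (c - a) by omega, List.range_add, List.map_append,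
    List.map_map, chainDesc, chainDesc]
  congr 1
  refine List.map_congr_left fun t ht => ?_
  simp only [List.mem_range] at ht
  simp only [Function.comp_apply]
  omega

lemma idxOf_succ_lt_idxOf_chainDesc {a b k : ℕ} (hak : a < k) (hkb : k < b) :
    (chainDesc a b).idxOf (k + 1) < (chainDesc a b).idxOf k := by
  have hk1 : k + 1 ∈ chainDesc k b := mem_chainDesc.2 ⟨by omega, hkb⟩
  have hk : k ∉ chainDesc k b := by simp [mem_chainDesc]
  rw [chainDesc_eq_append hak.le hkb.le, List.idxOf_append_of_mem hk1,
    List.idxOf_append_of_notMem hk]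
  have := List.idxOf_lt_length_iff.2 hk1
  rw [length_chainDesc] at this ⊢
  omega

def chains : ℕ → List ℕ → List ℕ
  | _, [] => []
  | a, b :: bs => chainDesc a b ++ chains b bs

lemma flatten_map_chainDesc_zip (a : ℕ) :
    ∀ l : List ℕ, (((a :: l).zip l).map fun p => chainDesc p.1 p.2).flatten = chains a l
  | [] => rfl
  | b :: bs => by
    simp only [List.zip_cons_cons, List.map_cons, List.flatten_cons, chains]
    rw [flatten_map_chainDesc_zip b bs]

lemma normalWord_eq_chains (n : ℕ) (S : Finset ℕ) :
    normalWord n S = chains 0 (S.sort (· ≤ ·) ++ [n - 1]) :=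
  flatten_map_chainDesc_zip 0 _

lemma mem_chains (a k : ℕ) :
    ∀ bs : List ℕ, (a :: bs).Pairwise (· < ·) → (k ∈ chains a bs ↔ a < k ∧ ∃ b ∈ bs, k ≤ b)
  | [], _ => by simp [chains]
  | b :: bs, hsorted => by
    obtain ⟨hlt, hsorted'⟩ := List.pairwise_cons.1 hsorted
    have hab : a < b := hlt b List.mem_cons_self
    rw [chains, List.mem_append, mem_chainDesc, mem_chains b k bs hsorted']
    constructor
    · rintro (⟨hak, hkb⟩ | ⟨hbk, c, hc, hkc⟩)
      · exact ⟨hak, b, List.mem_cons_self, hkb⟩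
      · exact ⟨by omega, c, List.mem_cons_of_mem b hc, hkc⟩
    · rintro ⟨hak, c, hc, hkc⟩
      by_cases hkb : k ≤ b
      · exact Or.inl ⟨hak, hkb⟩
      · rcases List.mem_cons.1 hc with rfl | hc
        · omega
        · exact Or.inr ⟨by omega, c, hc, hkc⟩

lemma idxOf_lt_idxOf_succ_chains_iff {a k : ℕ} (hak : a < k) :
    ∀ bs : List ℕ, (a :: bs).Pairwise (· < ·) → (∃ b ∈ bs, k < b) →
      ((chains a bs).idxOf k < (chains a bs).idxOf (k + 1) ↔ k ∈ bs)
  | [], _, ⟨_, hc, _⟩ => absurd hc List.not_mem_nil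
  | b :: bs, hsorted, ⟨c, hc, hkc⟩ => by
    obtain ⟨-, hsorted'⟩ := List.pairwise_cons.1 hsorted
    have hbs : ∀ d ∈ bs, b < d := (List.pairwise_cons.1 hsorted').1
    rw [chains]
    rcases lt_trichotomy k b with hkb | rfl | hbk
    · have hk : k ∈ chainDesc a b := mem_chainDesc.2 ⟨hak, hkb.le⟩
      have hk1 : k + 1 ∈ chainDesc a b := mem_chainDesc.2 ⟨by omega, hkb⟩
      have hkbs : k ∉ b :: bs := fun h => by
        rcases List.mem_cons.1 h with rfl | h
        · omega
        · exact absurd (hbs k h) (by omega)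
      rw [List.idxOf_append_of_mem hk, List.idxOf_append_of_mem hk1, iff_false_intro hkbs,
        iff_false, not_lt]
      exact (idxOf_succ_lt_idxOf_chainDesc hak hkb).le
    · have hk : k ∈ chainDesc a k := mem_chainDesc.2 ⟨hak, le_rfl⟩
      have hk1 : k + 1 ∉ chainDesc a k := by simp [mem_chainDesc]
      rw [List.idxOf_append_of_mem hk, List.idxOf_append_of_notMem hk1,
        iff_true_intro List.mem_cons_self, iff_true]
      exact (List.idxOf_lt_length_iff.2 hk).trans_le (Nat.le_add_right _ _)
    · have hcbs : c ∈ bs := (List.mem_cons.1 hc).resolve_left (by omega)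
      rw [List.idxOf_append_of_notMem (by rw [mem_chainDesc]; omega),
        List.idxOf_append_of_notMem (by rw [mem_chainDesc]; omega), Nat.add_lt_add_iff_left,
        idxOf_lt_idxOf_succ_chains_iff hbk bs hsorted' ⟨c, hcbs, hkc⟩, List.mem_cons,
        or_iff_right (by omega)]

section normalWord

variable {n : ℕ} {S : Finset ℕ}

lemma pairwise_lt_normalWord_bounds (hn : 2 ≤ n) (hS : S ⊆ Finset.Icc 1 (n - 2)) :
    (0 :: (S.sort (· ≤ ·) ++ [n - 1])).Pairwise (· < ·) := by
  have hS' : ∀ x ∈ S.sort (· ≤ ·), 1 ≤ x ∧ x ≤ n - 2 := fun x hx =>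
    Finset.mem_Icc.1 (hS ((Finset.mem_sort _).1 hx))
  refine List.pairwise_cons.2 ⟨fun x hx => ?_, List.pairwise_append.2
    ⟨S.sortedLT_sort.pairwise, List.pairwise_singleton _ _, fun x hx y hy => ?_⟩⟩
  · rcases List.mem_append.1 hx with hx | hx
    · exact (hS' x hx).1
    · rw [List.mem_singleton.1 hx]
      omega
  · rw [List.mem_singleton.1 hy]
    have := hS' x hx
    omega

lemma mem_normalWord (hn : 2 ≤ n) (hS : S ⊆ Finset.Icc 1 (n - 2)) {k : ℕ} :
    k ∈ normalWord n S ↔ 1 ≤ k ∧ k ≤ n - 1 := by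
  rw [normalWord_eq_chains, mem_chains 0 k _ (pairwise_lt_normalWord_bounds hn hS)]
  constructor
  · rintro ⟨hk, b, hb, hkb⟩
    rcases List.mem_append.1 hb with hb | hb
    · have := Finset.mem_Icc.1 (hS ((Finset.mem_sort _).1 hb))
      omega
    · rw [List.mem_singleton.1 hb] at hkb
      omega
  · rintro ⟨hk, hkn⟩
    exact ⟨hk, n - 1, List.mem_append_right _ (List.mem_singleton_self _), hkn⟩

lemma idxOf_lt_idxOf_succ_normalWord_iff (hn : 2 ≤ n) (hS : S ⊆ Finset.Icc 1 (n - 2))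
    {k : ℕ} (hk : 1 ≤ k) (hkn : k ≤ n - 2) :
    (normalWord n S).idxOf k < (normalWord n S).idxOf (k + 1) ↔ k ∈ S := by
  rw [normalWord_eq_chains, idxOf_lt_idxOf_succ_chains_iff hk _
    (pairwise_lt_normalWord_bounds hn hS)
    ⟨n - 1, List.mem_append_right _ (List.mem_singleton_self _), by omega⟩,
    List.mem_append, List.mem_singleton, Finset.mem_sort, or_iff_left (by omega)]

end normalWord

theorem normal_word_first_last_of_chain_general (n : ℕ) (S : Finset ℕ)
    (hS : S ⊆ Finset.Icc 1 (n - 2)) (j : ℕ) (h1 : 1 < j) (h2 : j < n - 1) :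
    (((normalWord n S).idxOf j < (normalWord n S).idxOf (j - 1) ∧
        (normalWord n S).idxOf j < (normalWord n S).idxOf (j + 1)) ↔
      (j ∈ S ∧ j - 1 ∉ S)) ∧
    (((normalWord n S).idxOf (j - 1) < (normalWord n S).idxOf j ∧
        (normalWord n S).idxOf (j + 1) < (normalWord n S).idxOf j) ↔
      (j - 1 ∈ S ∧ j ∉ S)) := by
  have hn : 2 ≤ n := by omega
  have hprev := idxOf_lt_idxOf_succ_normalWord_iff hn hS (k := j - 1) (by omega) (by omega)
  rw [Nat.sub_add_cancel h1.le] at hprev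
  have hnext := idxOf_lt_idxOf_succ_normalWord_iff hn hS (k := j) (by omega) (by omega)
  have hj : j ∈ normalWord n S := (mem_normalWord hn hS).2 ⟨by omega, by omega⟩
  have hne_prev := mt (List.idxOf_inj hj).1 (by omega : j ≠ j - 1)
  have hne_next := mt (List.idxOf_inj hj).1 (by omega : j ≠ j + 1)
  rw [← hprev, ← hnext]
  omega

/-- Let `n ≥ 2`, `S ⊆ {1, …, n-2}`, and let `(i_1, …, i_{n-1})` be the
normal-form index sequence of `S`. For `1 < j < n - 1`:
(a) `j` occurs before both `j - 1` and `j + 1` iff `j` is the first entry of a decreasing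
chain of length at least two, i.e. iff `j ∈ S` and `j - 1 ∉ S`; and
(b) `j` occurs after both `j - 1` and `j + 1` iff `j` is the last entry of a decreasing
chain of length at least two, i.e. iff `j - 1 ∈ S` and `j ∉ S`. -/
theorem normal_word_first_last_of_chain (n : ℕ) (hn : 2 ≤ n) (S : Finset ℕ)
    (hS : S ⊆ Finset.Icc 1 (n - 2)) (j : ℕ) (h1 : 1 < j) (h2 : j < n - 1) :
    (((normalWord n S).idxOf j < (normalWord n S).idxOf (j - 1) ∧
        (normalWord n S).idxOf j < (normalWord n S).idxOf (j + 1)) ↔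
      (j ∈ S ∧ j - 1 ∉ S)) ∧
    (((normalWord n S).idxOf (j - 1) < (normalWord n S).idxOf j ∧
        (normalWord n S).idxOf (j + 1) < (normalWord n S).idxOf j) ↔
      (j - 1 ∈ S ∧ j ∉ S)) :=
  normal_word_first_last_of_chain_general n S hS j h1 h2
end
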